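/- arXiv:2411.19755 — 8 statements merged into one kernel-verified Lean document; each statement's English description precedes it below -/
import Mathlib

section
/- For all real numbers x and y with |y| < π, the modulus of 1/(1 + e^{x+iy}) is at most 1/((1 + e^x) cos(y/2)). -/
/-! Rotating by the unit factor `e^{-iy/2}` does not change the modulus and turns
`1 + e^{x+iy}` into `e^{-iy/2} + e^{x+iy/2}`, whose real part is `(1 + e^x) cos (y/2)`;
the modulus dominates the real part. For `|y| < π` this lower bound is positive, so it
can be inverted. -/

open Complex Real

theorem one_add_exp_mul_cos_half_le_norm (x y : ℝ) :
    (1 + Real.exp x) * Real.cos (y / 2) ≤ ‖1 + Complex.exp (x + y * I)‖ := by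
  set u := Complex.exp (((-(y / 2) : ℝ) : ℂ) * I)
  have hrot : u * (1 + Complex.exp (x + y * I)) = u + Complex.exp (x + (y / 2 : ℝ) * I) := by
    rw [mul_add, mul_one, ← Complex.exp_add]
    push_cast
    ring_nf
  calc (1 + Real.exp x) * Real.cos (y / 2)
      = (u * (1 + Complex.exp (x + y * I))).re := by
        rw [hrot, add_re, exp_ofReal_mul_I_re, Complex.exp_re]
        simp only [Real.cos_neg, ofReal_div, ofReal_ofNat, add_re, ofReal_re, mul_re,
          div_ofNat_re, I_re, mul_zero, div_ofNat_im, ofReal_im, zero_div, I_im, mul_one,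
          sub_self, add_zero, add_im, mul_im, zero_add]
        ring
    _ ≤ ‖u * (1 + Complex.exp (x + y * I))‖ := re_le_norm _
    _ = ‖1 + Complex.exp (x + y * I)‖ := by
        rw [norm_mul, Complex.norm_exp_ofReal_mul_I, one_mul]

theorem stmt_0 (x y : ℝ) (hy : |y| < Real.pi) :
    ‖(1 / (1 + Complex.exp (x + y * Complex.I)))‖ ≤
      1 / ((1 + Real.exp x) * Real.cos (y / 2)) := by
  have hcos : 0 < Real.cos (y / 2) := by
    obtain ⟨hlo, hhi⟩ := abs_lt.mp hy
    exact Real.cos_pos_of_mem_Ioo ⟨by linarith, by linarith⟩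
  rw [norm_div, norm_one]
  exact one_div_le_one_div_of_le (by positivity) (one_add_exp_mul_cos_half_le_norm x y)
end

section
/- For all real numbers x and y with |y| < π, the modulus of 1/(1 + e^{-(x+iy)}) is at most 1/((1 + e^{-x}) cos(y/2)). -/
/-!
Write `e^{-(x+iy)} = r e^{iθ}` with `r = e^{-x} > 0` and `θ = -y`. The half-angle identity
`|1 + r e^{iθ}|² = (1 + r)² cos²(θ/2) + (1 - r)² sin²(θ/2)` gives
`|1 + e^{-(x+iy)}| ≥ (1 + e^{-x}) cos(y/2)`, and for `|y| < π` the right-hand side is positive,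
so the bound follows by taking reciprocals.
-/

open Complex Real

theorem norm_one_add_ofReal_mul_exp_mul_I_sq (r θ : ℝ) :
    ‖1 + r * Complex.exp (θ * I)‖ ^ 2 =
      ((1 + r) * Real.cos (θ / 2)) ^ 2 + ((1 - r) * Real.sin (θ / 2)) ^ 2 := by
  have hcos : Real.cos θ = Real.cos (θ / 2) ^ 2 - Real.sin (θ / 2) ^ 2 := by
    rw [← Real.cos_two_mul', mul_div_cancel₀ θ two_ne_zero]
  have hpyth := Real.sin_sq_add_cos_sq (θ / 2)
  rw [← Complex.normSq_eq_norm_sq, Complex.normSq_apply]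
  simp only [Complex.add_re, Complex.add_im, Complex.one_re, Complex.one_im,
    Complex.re_ofReal_mul, Complex.im_ofReal_mul, Complex.exp_ofReal_mul_I_re,
    Complex.exp_ofReal_mul_I_im]
  linear_combination (2 * r) * hcos - (1 + r ^ 2) * hpyth + r ^ 2 * Real.sin_sq_add_cos_sq θ

theorem mul_cos_half_le_norm_one_add_ofReal_mul_exp_mul_I (r θ : ℝ) :
    (1 + r) * Real.cos (θ / 2) ≤ ‖1 + r * Complex.exp (θ * I)‖ := by
  refine (le_abs_self _).trans (abs_le_of_sq_le_sq ?_ (norm_nonneg _))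
  rw [norm_one_add_ofReal_mul_exp_mul_I_sq]
  exact le_add_of_nonneg_right (sq_nonneg _)

theorem stmt_1 (x y : ℝ) (hy : |y| < Real.pi) :
    ‖(1 / (1 + Complex.exp (-(x + y * Complex.I))))‖ ≤
      1 / ((1 + Real.exp (-x)) * Real.cos (y / 2)) := by
  have hcos : 0 < Real.cos (y / 2) := by
    obtain ⟨hy₁, hy₂⟩ := abs_lt.mp hy
    exact Real.cos_pos_of_mem_Ioo ⟨by linarith, by linarith⟩
  have hexp : Complex.exp (-(x + y * I)) = ↑(Real.exp (-x)) * Complex.exp (↑(-y) * I) := by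
    push_cast
    rw [← Complex.exp_add]
    ring_nf
  have hnorm := mul_cos_half_le_norm_one_add_ofReal_mul_exp_mul_I (Real.exp (-x)) (-y)
  rw [neg_div, Real.cos_neg, ← hexp] at hnorm
  rw [norm_div, norm_one]
  exact one_div_le_one_div_of_le (by positivity) hnorm
end

section
/- For all real numbers x and y with |y| < π, the modulus of log(1 + e^{-(x+iy)}) is at most log(1 + e^{-x}) / cos(y/2). -/
/-! Along the horizontal ray, `t ↦ log (1 + e^{-(t + iy)})` has derivative `-1 / (1 + e^{t + iy})`,
and `|1 + e^{t + iy}| ≥ (1 + e^t) cos (y / 2)`. So its derivative is dominated in norm by that of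
`t ↦ -log (1 + e^{-t}) / cos (y / 2)`; both functions vanish at `+∞`, and comparing their increments
on `[x, ∞)` gives the bound. -/

open Complex Real

open Filter Topology Set

theorem norm_le_neg_of_norm_deriv_le_deriv {E : Type*} [NormedAddCommGroup E] [NormedSpace ℝ E]
    {f f' : ℝ → E} {g g' : ℝ → ℝ} {a : ℝ}
    (hf : ∀ t, a ≤ t → HasDerivAt f (f' t) t) (hg : ∀ t, a ≤ t → HasDerivAt g (g' t) t)
    (hle : ∀ t, a ≤ t → ‖f' t‖ ≤ g' t)
    (hf0 : Tendsto f atTop (𝓝 0)) (hg0 : Tendsto g atTop (𝓝 0)) :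
    ‖f a‖ ≤ -g a := by
  have hsub : ∀ b, a ≤ b → ‖f b - f a‖ ≤ g b - g a := fun b hab =>
    image_norm_le_of_norm_deriv_right_le_deriv_boundary' (f := fun t => f t - f a)
      (B := fun t => g t - g a)
      (fun t ht => ((hf t ht.1).sub_const _).continuousAt.continuousWithinAt)
      (fun t ht => ((hf t ht.1).sub_const _).hasDerivWithinAt) (by simp)
      (fun t ht => ((hg t ht.1).sub_const _).continuousAt.continuousWithinAt)
      (fun t ht => ((hg t ht.1).sub_const _).hasDerivWithinAt)
      (fun t ht => hle t ht.1) (right_mem_Icc.2 hab)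
  have hlim := le_of_tendsto_of_tendsto ((hf0.sub_const (f a)).norm) (hg0.sub_const (g a))
    (eventually_atTop.2 ⟨a, hsub⟩)
  simpa using hlim

theorem Complex.one_add_exp_mem_slitPlane {w : ℂ} (hw : |w.im| < π) :
    1 + exp w ∈ slitPlane := by
  rw [mem_slitPlane_iff]
  obtain ⟨hlo, hhi⟩ := abs_lt.1 hw
  by_cases hsin : Real.sin w.im = 0
  · have him : w.im = 0 := (Real.sin_eq_zero_iff_of_lt_of_lt hlo hhi).1 hsin
    left
    simp only [add_re, one_re, exp_re, him, Real.cos_zero, mul_one]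
    positivity
  · right
    simpa [exp_im] using mul_ne_zero (Real.exp_pos w.re).ne' hsin

theorem Complex.norm_one_add_exp_sq (w : ℂ) :
    ‖1 + exp w‖ ^ 2 = ((1 + Real.exp w.re) * Real.cos (w.im / 2)) ^ 2
      + ((1 - Real.exp w.re) * Real.sin (w.im / 2)) ^ 2 := by
  have hcos : Real.cos w.im = 2 * Real.cos (w.im / 2) ^ 2 - 1 := by
    rw [← Real.cos_two_mul]; ring_nf
  have hsin : Real.sin w.im = 2 * Real.sin (w.im / 2) * Real.cos (w.im / 2) := by
    rw [← Real.sin_two_mul]; ring_nf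
  rw [Complex.sq_norm, normSq_apply]
  simp only [add_re, one_re, exp_re, add_im, one_im, exp_im, zero_add, hcos, hsin]
  linear_combination (4 * Real.exp w.re ^ 2 * Real.cos (w.im / 2) ^ 2 - (1 - Real.exp w.re) ^ 2)
    * Real.sin_sq_add_cos_sq (w.im / 2)

theorem Complex.mul_cos_half_le_norm_one_add_exp (w : ℂ) :
    (1 + Real.exp w.re) * Real.cos (w.im / 2) ≤ ‖1 + exp w‖ := by
  refine le_of_sq_le_sq ?_ (norm_nonneg _)
  rw [norm_one_add_exp_sq]
  exact le_add_of_nonneg_right (sq_nonneg _)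

theorem Complex.hasDerivAt_log_one_add_exp_neg {w : ℂ} (hw : |w.im| < π) :
    HasDerivAt (fun z => log (1 + exp (-z))) (-(1 + exp w)⁻¹) w := by
  have hslit : 1 + exp (-w) ∈ slitPlane := one_add_exp_mem_slitPlane (by simpa using hw)
  have hne : 1 + exp w ≠ 0 := slitPlane_ne_zero (one_add_exp_mem_slitPlane hw)
  refine ((hasDerivAt_neg w).cexp.const_add 1).clog hslit |>.congr_deriv ?_
  rw [exp_neg]
  field_simp
  rw [add_comm (exp w), div_self hne]

theorem Real.hasDerivAt_log_one_add_exp_neg (t : ℝ) :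
    HasDerivAt (fun s => Real.log (1 + Real.exp (-s))) (-(1 + Real.exp t)⁻¹) t := by
  refine ((hasDerivAt_neg t).exp.const_add 1).log (by positivity) |>.congr_deriv ?_
  rw [Real.exp_neg]
  field_simp
  ring

theorem Complex.tendsto_log_one_add_exp_comap_re_atBot :
    Tendsto (fun z => log (1 + exp z)) (comap re atBot) (𝓝 0) := by
  have h1 : Tendsto (fun z => 1 + exp z) (comap re atBot) (𝓝 1) := by
    simpa using tendsto_exp_comap_re_atBot.const_add 1
  simpa using h1.clog one_mem_slitPlane

theorem Real.tendsto_log_one_add_exp_neg_atTop :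
    Tendsto (fun t => Real.log (1 + Real.exp (-t))) atTop (𝓝 0) := by
  have h1 : Tendsto (fun t => 1 + Real.exp (-t)) atTop (𝓝 1) := by
    simpa using (Real.tendsto_exp_atBot.comp tendsto_neg_atTop_atBot).const_add 1
  simpa using h1.log one_ne_zero

theorem stmt_2 (x y : ℝ) (hy : |y| < Real.pi) :
    ‖Complex.log (1 + Complex.exp (-(x + y * Complex.I)))‖ ≤
      Real.log (1 + Real.exp (-x)) / Real.cos (y / 2) := by
  have hc : 0 < Real.cos (y / 2) :=
    Real.cos_pos_of_mem_Ioo ⟨by linarith [(abs_lt.1 hy).1], by linarith [(abs_lt.1 hy).2]⟩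
  have hF (t : ℝ) : HasDerivAt (fun s : ℝ => log (1 + exp (-(s + y * I))))
      (-(1 + exp (t + y * I))⁻¹) t :=
    ((Complex.hasDerivAt_log_one_add_exp_neg (w := t + y * I) (by simpa using hy)).comp_add_const
      (t : ℂ) (y * I)).comp_ofReal
  have hG (t : ℝ) : HasDerivAt (fun s => -(Real.log (1 + Real.exp (-s)) / Real.cos (y / 2)))
      ((1 + Real.exp t)⁻¹ / Real.cos (y / 2)) t :=
    ((Real.hasDerivAt_log_one_add_exp_neg t).div_const _).neg.congr_deriv
      (by rw [neg_div, neg_neg])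
  have hbound (t : ℝ) : ‖-(1 + exp (t + y * I))⁻¹‖ ≤ (1 + Real.exp t)⁻¹ / Real.cos (y / 2) := by
    rw [norm_neg, norm_inv, div_eq_mul_inv, ← mul_inv]
    refine inv_anti₀ (by positivity) ?_
    simpa using mul_cos_half_le_norm_one_add_exp (t + y * I)
  have hF0 : Tendsto (fun s : ℝ => log (1 + exp (-(s + y * I)))) atTop (𝓝 0) :=
    tendsto_log_one_add_exp_comap_re_atBot.comp <| tendsto_comap_iff.2 <| by
      simpa [Function.comp_def] using tendsto_neg_atTop_atBot
  have hG0 :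
      Tendsto (fun s => -(Real.log (1 + Real.exp (-s)) / Real.cos (y / 2))) atTop (𝓝 0) := by
    simpa using (Real.tendsto_log_one_add_exp_neg_atTop.div_const (Real.cos (y / 2))).neg
  simpa using norm_le_neg_of_norm_deriv_le_deriv (a := x) (fun t _ => hF t) (fun t _ => hG t)
    (fun t _ => hbound t) hF0 hG0
end

section
/- Let T > 0 and let x, y be real numbers with |y| < π. Then |log(T/(1 + e^{-(x+iy)}))| ≤ |log T| + log(1 + e^{-x}) / cos(y/2). -/
/-!
Write `1 + e^{-(x+iy)} = 1 + r e^{iθ}` with `r = e^{-x}` and `θ = -y`. The elementary estimate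
`‖1 + s e^{iθ}‖ ≥ (1 + s) cos (θ/2)` bounds the derivative `e^{iθ} / (1 + s e^{iθ})` of
`s ↦ log (1 + s e^{iθ})` by the derivative of `s ↦ log (1 + s) / cos (θ/2)`. Both functions vanish at
`s = 0`, so comparing them on `[0, r]` gives `‖log (1 + r e^{iθ})‖ ≤ log (1 + r) / cos (θ/2)`.
Finally `log (T / w) = log T - log w` for `w` off the closed negative real axis.
-/

open Complex Real

namespace Complex

theorem mul_cos_half_le_norm_one_add_mul_exp {r : ℝ} (hr : 0 ≤ r) (θ : ℝ) :
    (1 + r) * Real.cos (θ / 2) ≤ ‖1 + r * exp (θ * I)‖ := by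
  have hnorm : ‖1 + r * exp (θ * I)‖ ^ 2 = 1 + 2 * r * Real.cos θ + r ^ 2 := by
    rw [Complex.sq_norm, normSq_apply]
    simp only [add_re, one_re, add_im, one_im, re_ofReal_mul, im_ofReal_mul, exp_ofReal_mul_I_re,
      exp_ofReal_mul_I_im, zero_add]
    linear_combination r ^ 2 * Real.sin_sq_add_cos_sq θ
  have hcos : Real.cos θ = 2 * Real.cos (θ / 2) ^ 2 - 1 := by
    rw [← Real.cos_two_mul, mul_div_cancel₀ θ two_ne_zero]
  -- `‖1 + r e^{iθ}‖² - ((1 + r) cos (θ/2))² = ((1 - r) sin (θ/2))²`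
  have hsq : ((1 + r) * Real.cos (θ / 2)) ^ 2 ≤ ‖1 + r * exp (θ * I)‖ ^ 2 := by
    rw [hnorm, hcos]
    nlinarith [sq_nonneg ((1 - r) * Real.sin (θ / 2)), Real.sin_sq_add_cos_sq (θ / 2)]
  exact (abs_le_of_sq_le_sq' hsq (norm_nonneg _)).2

theorem one_add_mul_exp_mem_slitPlane {r θ : ℝ} (hr : 0 ≤ r) (hθ : |θ| < π) :
    1 + r * exp (θ * I) ∈ slitPlane := by
  rw [mem_slitPlane_iff]
  simp only [add_re, one_re, add_im, one_im, re_ofReal_mul, im_ofReal_mul, exp_ofReal_mul_I_re,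
    exp_ofReal_mul_I_im, zero_add]
  rcases hr.eq_or_lt with rfl | hr
  · simp
  by_cases hsin : Real.sin θ = 0
  · obtain ⟨hθ₁, hθ₂⟩ := abs_lt.mp hθ
    rw [(Real.sin_eq_zero_iff_of_lt_of_lt hθ₁ hθ₂).mp hsin, Real.cos_zero]
    left; linarith
  · exact Or.inr (mul_ne_zero hr.ne' hsin)

theorem hasDerivAt_log_one_add_mul_exp {s θ : ℝ} (hs : 0 ≤ s) (hθ : |θ| < π) :
    HasDerivAt (fun t : ℝ ↦ log (1 + t * exp (θ * I)))
      (exp (θ * I) / (1 + s * exp (θ * I))) s := by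
  have h : HasDerivAt (fun t : ℝ ↦ 1 + (t : ℂ) * exp (θ * I)) (1 * exp (θ * I)) s :=
    ((hasDerivAt_id s).ofReal_comp.mul_const _).const_add 1
  simpa using h.clog_real (one_add_mul_exp_mem_slitPlane hs hθ)

theorem norm_log_one_add_mul_exp_le {r θ : ℝ} (hr : 0 ≤ r) (hθ : |θ| < π) :
    ‖log (1 + r * exp (θ * I))‖ ≤ Real.log (1 + r) / Real.cos (θ / 2) := by
  have hc : 0 < Real.cos (θ / 2) :=
    Real.cos_pos_of_mem_Ioo ⟨by linarith [neg_abs_le θ], by linarith [le_abs_self θ]⟩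
  have hderiv : ∀ s ∈ Set.Icc 0 r, HasDerivAt (fun t : ℝ ↦ log (1 + t * exp (θ * I)))
      (exp (θ * I) / (1 + s * exp (θ * I))) s :=
    fun s hs ↦ hasDerivAt_log_one_add_mul_exp hs.1 hθ
  have hB : ∀ s ∈ Set.Icc 0 r, HasDerivAt (fun t ↦ Real.log (1 + t) / Real.cos (θ / 2))
      ((1 + s)⁻¹ / Real.cos (θ / 2)) s := fun s hs ↦ by
    have hs' : 1 + id s ≠ 0 := by simp only [id]; linarith [hs.1]
    simpa using (((hasDerivAt_id s).const_add 1).log hs').div_const _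
  refine image_norm_le_of_norm_deriv_right_le_deriv_boundary'
    (fun s hs ↦ (hderiv s hs).continuousAt.continuousWithinAt)
    (fun s hs ↦ (hderiv s (Set.Ico_subset_Icc_self hs)).hasDerivWithinAt)
    (by simp) (fun s hs ↦ (hB s hs).continuousAt.continuousWithinAt)
    (fun s hs ↦ (hB s (Set.Ico_subset_Icc_self hs)).hasDerivWithinAt) ?_ ⟨hr, le_rfl⟩
  intro s hs
  rw [norm_div, norm_exp_ofReal_mul_I, one_div, div_eq_mul_inv, ← mul_inv]
  exact inv_anti₀ (by have := hs.1; positivity) (mul_cos_half_le_norm_one_add_mul_exp hs.1 θ)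

theorem log_ofReal_div {T : ℝ} (hT : 0 < T) {w : ℂ} (hw : w ∈ slitPlane) :
    log (T / w) = Real.log T - log w := by
  rw [div_eq_mul_inv, log_ofReal_mul hT (inv_ne_zero (slitPlane_ne_zero hw)),
    log_inv _ (slitPlane_arg_ne_pi hw), sub_eq_add_neg]

end Complex

theorem stmt_3 (T : ℝ) (hT : 0 < T) (x y : ℝ) (hy : |y| < Real.pi) :
    ‖Complex.log ((T : ℂ) / (1 + Complex.exp (-(x + y * Complex.I))))‖ ≤
      |Real.log T| + Real.log (1 + Real.exp (-x)) / Real.cos (y / 2) := by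
  have hpolar : 1 + exp (-(x + y * I)) = 1 + (Real.exp (-x) : ℂ) * exp ((-y : ℝ) * I) := by
    push_cast
    rw [← Complex.exp_add]
    ring_nf
  have hr : 0 ≤ Real.exp (-x) := (Real.exp_pos _).le
  have hθ : |-y| < π := by rwa [abs_neg]
  have hlog := norm_log_one_add_mul_exp_le hr hθ
  rw [neg_div, Real.cos_neg, ← hpolar] at hlog
  rw [log_ofReal_div hT (hpolar ▸ one_add_mul_exp_mem_slitPlane hr hθ)]
  calc ‖(Real.log T : ℂ) - log (1 + exp (-(x + y * I)))‖
      ≤ ‖(Real.log T : ℂ)‖ + ‖log (1 + exp (-(x + y * I)))‖ := norm_sub_le _ _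
    _ ≤ |Real.log T| + Real.log (1 + Real.exp (-x)) / Real.cos (y / 2) := by
      rw [norm_real, Real.norm_eq_abs]
      gcongr
end

section
/- For all real numbers x and y with |y| < π/2, the modulus of 1/(1 + e^{π sinh(x+iy)}) is at most 1/((1 + e^{π sinh(x) cos y}) cos((π/2) sin y)). -/
/-!
Write `π sinh (x + iy) = a + ib` with `a = π sinh x cos y`, `b = π cosh x sin y`, and put
`c = (π/2) sin y`. Since `|1 + e^(a+ib)|² = (1 + e^a)² - 4 e^a sin² (b/2)` and
`(1 + e^a)² = 4 e^a cosh² (a/2)`, the bound `|1 + e^(a+ib)| ≥ (1 + e^a) cos c` follows from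
`|sin (b/2)| ≤ cosh (a/2) |sin c|`, where `b/2 = c cosh x`. For `c ≥ 0`, expanding
`sin (c + c (cosh x - 1))` to first order leaves the error term `cos c · c (cosh x - 1)`, which is
at most `sin c (cosh (a/2) - 1)` by `cos c ≤ (π/2) cos² y`, Jordan's inequality
`c ≤ (π/2) sin c`, `2 (cosh x - 1) ≤ sinh² x` and `cosh s ≥ 1 + s²/2`.
-/

open Complex Real

namespace Real

lemma cos_pi_div_two_mul_le {t : ℝ} (h0 : 0 ≤ t) (h1 : t ≤ 1) :
    cos (π / 2 * t) ≤ π / 2 * (1 - t ^ 2) := by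
  have h : cos (π / 2 * t) ≤ π / 2 * (1 - t) := by
    rw [← sin_pi_div_two_sub]
    calc sin (π / 2 - π / 2 * t) ≤ π / 2 - π / 2 * t := sin_le (by nlinarith [pi_pos])
      _ = π / 2 * (1 - t) := by ring
  nlinarith [mul_nonneg (mul_nonneg pi_pos.le (sub_nonneg.2 h1)) h0]

lemma abs_sin_add_le {c : ℝ} (u : ℝ) (hc0 : 0 ≤ c) (hc : c ≤ π / 2) :
    |sin (c + u)| ≤ sin c + cos c * |u| := by
  have hsin : 0 ≤ sin c := sin_nonneg_of_nonneg_of_le_pi hc0 (by linarith [pi_pos])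
  have hcos : 0 ≤ cos c := cos_nonneg_of_mem_Icc ⟨by linarith [pi_pos], hc⟩
  rw [sin_add]
  calc |sin c * cos u + cos c * sin u| ≤ |sin c * cos u| + |cos c * sin u| := abs_add_le _ _
    _ = sin c * |cos u| + cos c * |sin u| := by
      rw [abs_mul, abs_mul, abs_of_nonneg hsin, abs_of_nonneg hcos]
    _ ≤ sin c + cos c * |u| :=
      add_le_add (mul_le_of_le_one_right hsin (abs_cos_le_one u))
        (mul_le_mul_of_nonneg_left abs_sin_le_abs hcos)

lemma sq_le_sinh_sq (x : ℝ) : x ^ 2 ≤ sinh x ^ 2 := by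
  rcases le_total 0 x with hx | hx
  · exact pow_le_pow_left₀ hx (self_le_sinh_iff.2 hx) 2
  · simpa using pow_le_pow_left₀ (neg_nonneg.2 hx) (self_le_sinh_iff.2 (neg_nonneg.2 hx)) 2

lemma one_add_sq_div_two_le_cosh (x : ℝ) : 1 + x ^ 2 / 2 ≤ cosh x := by
  have h := cosh_two_mul (x / 2)
  rw [show 2 * (x / 2) = x by ring, cosh_sq'] at h
  nlinarith [sq_le_sinh_sq (x / 2)]

lemma two_mul_cosh_sub_one_le_sinh_sq (x : ℝ) : 2 * (cosh x - 1) ≤ sinh x ^ 2 := by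
  nlinarith [cosh_sq x, sq_nonneg (cosh x - 1)]

lemma abs_sin_lt_one {y : ℝ} (hy : |y| < π / 2) : |sin y| < 1 := by
  have := cos_pos_of_mem_Ioo (abs_lt.1 hy)
  rw [← sq_lt_one_iff_abs_lt_one]
  nlinarith [sin_sq_add_cos_sq y]

lemma one_add_exp_sq (x : ℝ) : (1 + rexp x) ^ 2 = 4 * rexp x * cosh (x / 2) ^ 2 := by
  have hE : rexp x = rexp (x / 2) ^ 2 := by rw [sq, ← exp_add, add_halves]
  rw [cosh_eq, exp_neg, hE]
  field_simp
  ring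

lemma abs_sin_mul_cosh_le {t k : ℝ} (x : ℝ) (htk : t ^ 2 + k ^ 2 = 1) :
    |sin (π / 2 * t * cosh x)| ≤ cosh (π / 2 * sinh x * k) * |sin (π / 2 * t)| := by
  wlog ht0 : 0 ≤ t generalizing t
  · simpa [neg_mul, mul_neg, sin_neg, abs_neg] using this (t := -t) (by rwa [neg_sq]) (by linarith)
  have ht1 : t ≤ 1 := by nlinarith
  set c := π / 2 * t
  set s := π / 2 * sinh x * k
  have hc0 : 0 ≤ c := by positivity
  have hc : c ≤ π / 2 := mul_le_of_le_one_right (by positivity) ht1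
  have hsin : 0 ≤ sin c := sin_nonneg_of_nonneg_of_le_pi hc0 (by linarith [pi_pos])
  have hcos : cos c ≤ π / 2 * k ^ 2 := by
    have h := cos_pi_div_two_mul_le ht0 ht1
    rwa [show 1 - t ^ 2 = k ^ 2 by linarith] at h
  have hjordan : c ≤ π / 2 * sin c := by
    calc c = π / 2 * (2 / π * c) := by field_simp
      _ ≤ π / 2 * sin c := by gcongr; exact mul_le_sin hc0 hc
  have hu : 0 ≤ c * (cosh x - 1) := mul_nonneg hc0 (sub_nonneg.2 (one_le_cosh x))
  have key : cos c * |c * (cosh x - 1)| ≤ sin c * (cosh s - 1) := by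
    rw [abs_of_nonneg hu]
    calc cos c * (c * (cosh x - 1))
        ≤ (π / 2 * k ^ 2) * (π / 2 * sin c * (sinh x ^ 2 / 2)) := by
          gcongr
          · exact sub_nonneg.2 (one_le_cosh x)
          · linarith [two_mul_cosh_sub_one_le_sinh_sq x]
      _ = sin c * (s ^ 2 / 2) := by ring
      _ ≤ sin c * (cosh s - 1) := by gcongr; linarith [one_add_sq_div_two_le_cosh s]
  rw [abs_of_nonneg hsin]
  calc |sin (c * cosh x)| = |sin (c + c * (cosh x - 1))| := by ring_nf
    _ ≤ sin c + cos c * |c * (cosh x - 1)| := abs_sin_add_le _ hc0 hc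
    _ ≤ cosh s * sin c := by linarith

end Real

namespace Complex

lemma sq_norm_one_add_exp (w : ℂ) :
    ‖1 + exp w‖ ^ 2 = (1 + rexp w.re) ^ 2 - 4 * rexp w.re * Real.sin (w.im / 2) ^ 2 := by
  rw [Complex.sq_norm, normSq_apply]
  simp only [add_re, add_im, one_re, one_im, exp_re, exp_im]
  have hcos : Real.cos w.im = 1 - 2 * Real.sin (w.im / 2) ^ 2 := by
    rw [← Real.cos_two_mul_eq_one_sub, mul_div_cancel₀ _ two_ne_zero]
  linear_combination (2 * rexp w.re) * hcos + rexp w.re ^ 2 * Real.sin_sq_add_cos_sq w.im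

lemma mul_cos_le_norm_one_add_exp (w : ℂ) {c : ℝ}
    (h : |Real.sin (w.im / 2)| ≤ Real.cosh (w.re / 2) * |Real.sin c|) :
    (1 + rexp w.re) * Real.cos c ≤ ‖1 + exp w‖ := by
  have h2 : Real.sin (w.im / 2) ^ 2 ≤ Real.cosh (w.re / 2) ^ 2 * Real.sin c ^ 2 := by
    simpa only [mul_pow, sq_abs] using pow_le_pow_left₀ (abs_nonneg _) h 2
  refine le_of_sq_le_sq ?_ (norm_nonneg _)
  calc ((1 + rexp w.re) * Real.cos c) ^ 2
      = (1 + rexp w.re) ^ 2 - 4 * rexp w.re * (Real.cosh (w.re / 2) ^ 2 * Real.sin c ^ 2) := by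
        rw [mul_pow, Real.one_add_exp_sq, Real.cos_sq']; ring
    _ ≤ (1 + rexp w.re) ^ 2 - 4 * rexp w.re * Real.sin (w.im / 2) ^ 2 := by gcongr
    _ = ‖1 + exp w‖ ^ 2 := (sq_norm_one_add_exp w).symm

end Complex

theorem stmt_5 (x y : ℝ) (hy : |y| < Real.pi / 2) :
    ‖(1 / (1 + Complex.exp (Real.pi * Complex.sinh (x + y * Complex.I))))‖ ≤
      1 / ((1 + Real.exp (Real.pi * Real.sinh x * Real.cos y)) *
        Real.cos (Real.pi / 2 * Real.sin y)) := by
  set w : ℂ := π * Complex.sinh (x + y * I)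
  obtain ⟨hre, him⟩ :
      w.re = π * Real.sinh x * Real.cos y ∧ w.im = π * Real.cosh x * Real.sin y := by
    constructor <;> simp [w, Complex.sinh_add, Complex.sinh_mul_I, Complex.cosh_mul_I,
      ← Complex.ofReal_sinh, ← Complex.ofReal_cosh, ← Complex.ofReal_sin, ← Complex.ofReal_cos,
      mul_assoc]
  have hcos : 0 < Real.cos (π / 2 * Real.sin y) := by
    refine Real.cos_pos_of_mem_Ioo (abs_lt.1 ?_)
    rw [abs_mul, abs_of_pos (by positivity)]
    exact mul_lt_of_lt_one_right (by positivity) (Real.abs_sin_lt_one hy)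
  have hlow : (1 + rexp w.re) * Real.cos (π / 2 * Real.sin y) ≤ ‖1 + exp w‖ := by
    refine mul_cos_le_norm_one_add_exp w ?_
    rw [hre, him]
    convert abs_sin_mul_cosh_le x (Real.sin_sq_add_cos_sq y) using 3 <;> ring
  rw [hre] at hlow
  rw [norm_div, norm_one]
  exact one_div_le_one_div_of_le (by positivity) hlow
end

section
/- Let α > 0. Then the function G₋(x) = -sinh(x) cosh(x) e^{πα sinh x} is monotonically increasing on (-∞, -arsinh(2/(πα))]. -/
/-!
The derivative of `G x = -sinh x * cosh x * exp (c * sinh x)` is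
`-(sinh² x + (1 + c * sinh x) * cosh² x) * exp (c * sinh x)`. Left of `-arsinh (2 / c)` we have
`c * sinh x ≤ -2`, so `1 + c * sinh x ≤ -1` and the bracket is at most `sinh² x - cosh² x = -1`.
-/

open Real Set

theorem hasDerivAt_neg_sinh_mul_cosh_mul_exp (c x : ℝ) :
    HasDerivAt (fun x => -sinh x * cosh x * exp (c * sinh x))
      (-(sinh x ^ 2 + (1 + c * sinh x) * cosh x ^ 2) * exp (c * sinh x)) x := by
  have hprod : HasDerivAt (fun x => -sinh x * cosh x) (-cosh x * cosh x + -sinh x * sinh x) x :=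
    (hasDerivAt_sinh x).neg.mul (hasDerivAt_cosh x)
  have hexp := ((hasDerivAt_sinh x).const_mul c).exp
  exact (hprod.mul hexp).congr_deriv (by ring)

theorem sinh_sq_add_mul_cosh_sq_le_neg_one {a : ℝ} (ha : a ≤ -1) (x : ℝ) :
    sinh x ^ 2 + a * cosh x ^ 2 ≤ -1 := by
  have hmul : (a + 1) * cosh x ^ 2 ≤ 0 :=
    mul_nonpos_of_nonpos_of_nonneg (by linarith) (sq_nonneg _)
  linarith [cosh_sq_sub_sinh_sq x]

theorem sinh_le_neg_of_le_neg_arsinh {x y : ℝ} (hx : x ≤ -arsinh y) : sinh x ≤ -y := by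
  simpa only [sinh_neg, sinh_arsinh] using sinh_le_sinh.mpr hx

theorem monotoneOn_neg_sinh_mul_cosh_mul_exp {c : ℝ} (hc : 0 < c) :
    MonotoneOn (fun x => -sinh x * cosh x * exp (c * sinh x)) (Iic (-arsinh (2 / c))) := by
  have hderiv := hasDerivAt_neg_sinh_mul_cosh_mul_exp c
  refine monotoneOn_of_deriv_nonneg (convex_Iic _)
    (fun x _ => (hderiv x).continuousAt.continuousWithinAt)
    (fun x _ => (hderiv x).differentiableAt.differentiableWithinAt) fun x hx => ?_
  rw [interior_Iic] at hx
  have hcs : c * sinh x ≤ -2 := by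
    have hs := sinh_le_neg_of_le_neg_arsinh hx.le
    calc c * sinh x ≤ c * -(2 / c) := mul_le_mul_of_nonneg_left hs hc.le
      _ = -2 := by field_simp
  have hbracket := sinh_sq_add_mul_cosh_sq_le_neg_one (a := 1 + c * sinh x) (by linarith) x
  rw [(hderiv x).deriv]
  exact mul_nonneg (by linarith) (exp_pos _).le

theorem stmt_8 (α : ℝ) (hα : 0 < α) :
    MonotoneOn (fun x : ℝ => -Real.sinh x * Real.cosh x * Real.exp (Real.pi * α * Real.sinh x))
      (Set.Iic (-Real.arsinh (2 / (Real.pi * α)))) :=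
  monotoneOn_neg_sinh_mul_cosh_mul_exp (mul_pos pi_pos hα)
end

section
/- Let β > 0. Then the function G₊(x) = sinh(x) cosh(x) e^{-πβ sinh x} is monotonically decreasing on [arsinh(2/(πβ)), ∞). -/
/-!
With `a = π β`, the derivative of `sinh x * cosh x * exp (-(a * sinh x))` is
`(cosh x ^ 2 + sinh x ^ 2 - a * sinh x * cosh x ^ 2) * exp (-(a * sinh x))`. As
`sinh x ^ 2 ≤ cosh x ^ 2`, the bracket is at most `cosh x ^ 2 * (2 - a * sinh x)`, which is
nonpositive once `sinh x ≥ 2 / a`.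
-/

open Real Set

namespace Real

theorem hasDerivAt_sinh_mul_cosh_mul_exp_neg_mul_sinh (a x : ℝ) :
    HasDerivAt (fun x => sinh x * cosh x * exp (-(a * sinh x)))
      ((cosh x ^ 2 + sinh x ^ 2 - a * sinh x * cosh x ^ 2) * exp (-(a * sinh x))) x := by
  have hexp : HasDerivAt (fun x => exp (-(a * sinh x)))
      (exp (-(a * sinh x)) * -(a * cosh x)) x :=
    (hasDerivAt_exp _).comp x ((hasDerivAt_sinh x).const_mul a).neg
  have hprod : HasDerivAt (fun x => sinh x * cosh x) (cosh x * cosh x + sinh x * sinh x) x :=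
    (hasDerivAt_sinh x).mul (hasDerivAt_cosh x)
  exact (hprod.mul hexp).congr_deriv (by ring)

theorem cosh_sq_add_sinh_sq_sub_mul_nonpos {a x : ℝ} (h : 2 ≤ a * sinh x) :
    cosh x ^ 2 + sinh x ^ 2 - a * sinh x * cosh x ^ 2 ≤ 0 :=
  calc cosh x ^ 2 + sinh x ^ 2 - a * sinh x * cosh x ^ 2
      ≤ cosh x ^ 2 * (2 - a * sinh x) := by nlinarith [sinh_sq x]
    _ ≤ 0 := mul_nonpos_of_nonneg_of_nonpos (sq_nonneg _) (by linarith)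

theorem antitoneOn_sinh_mul_cosh_mul_exp_neg_mul_sinh {a : ℝ} (ha : 0 < a) :
    AntitoneOn (fun x => sinh x * cosh x * exp (-(a * sinh x))) (Ici (arsinh (2 / a))) := by
  have hderiv := hasDerivAt_sinh_mul_cosh_mul_exp_neg_mul_sinh a
  refine antitoneOn_of_hasDerivWithinAt_nonpos (convex_Ici _)
    (fun x _ => (hderiv x).continuousAt.continuousWithinAt)
    (fun x _ => (hderiv x).hasDerivWithinAt) fun x hx => ?_
  rw [interior_Ici, mem_Ioi, ← sinh_lt_sinh, sinh_arsinh, div_lt_iff₀ ha] at hx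
  exact mul_nonpos_of_nonpos_of_nonneg
    (cosh_sq_add_sinh_sq_sub_mul_nonpos (by linarith)) (exp_nonneg _)

end Real

theorem stmt_9 (β : ℝ) (hβ : 0 < β) :
    AntitoneOn (fun x : ℝ => Real.sinh x * Real.cosh x * Real.exp (-(Real.pi * β * Real.sinh x)))
      (Set.Ici (Real.arsinh (2 / (Real.pi * β)))) :=
  antitoneOn_sinh_mul_cosh_mul_exp_neg_mul_sinh (mul_pos pi_pos hβ)
end

section
/- Let d > 0, μ > 0, α ≥ μ, and let n be a positive integer. Let h = arsinh(2dn/μ)/n and assume h ≤ πd. Then M = ⌈(1/h) arsinh((μ/α) q(2dn/μ))⌉, where q(x) = x/arsinh(x), satisfies Mh ≥ arsinh(2d/(αh)) ≥ arsinh(2/(πα)), and moreover α sinh(Mh) ≥ μ q(2dn/μ). -/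
open Real

/-! The whole argument rests on the identity `2d / (α h) = (μ / α) q(2dn/μ)`, which holds because
`h = arsinh(2dn/μ) / n`. Rounding up in the definition of `M` gives `M h ≥ arsinh(2d/(αh))`, the
bound `h ≤ π d` gives the comparison with `arsinh(2/(πα))`, and applying the increasing function
`sinh` to the first inequality gives the last one. -/

theorem Real.le_sinh_iff_arsinh_le {x y : ℝ} : x ≤ sinh y ↔ arsinh x ≤ y := by
  rw [← sinh_le_sinh (x := arsinh x), sinh_arsinh]

theorem le_natCeil_one_div_mul_mul {h : ℝ} (hh : 0 < h) (x : ℝ) : x ≤ ⌈1 / h * x⌉₊ * h := by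
  calc x = 1 / h * x * h := by field_simp
    _ ≤ ⌈1 / h * x⌉₊ * h := mul_le_mul_of_nonneg_right (Nat.le_ceil _) hh.le

theorem two_mul_div_mul_div_eq (d μ α A n : ℝ) (hμ : μ ≠ 0) :
    2 * d / (α * (A / n)) = μ / α * (2 * d * n / μ / A) := by
  rw [show μ / α * (2 * d * n / μ / A) = μ * μ⁻¹ * (2 * d / (α * (A / n))) by
      simp only [div_eq_mul_inv, mul_inv, inv_inv]; ring,
    mul_inv_cancel₀ hμ, one_mul]

theorem stmt_15 (d μ α : ℝ) (hd : 0 < d) (hμ : 0 < μ) (hα : μ ≤ α)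
    (n : ℕ) (hn : 0 < n)
    (h : ℝ) (hh : h = Real.arsinh (2 * d * n / μ) / n)
    (hhd : h ≤ Real.pi * d)
    (M : ℕ)
    (hM : M = ⌈(1 / h) * Real.arsinh ((μ / α) *
        ((2 * d * n / μ) / Real.arsinh (2 * d * n / μ)))⌉₊) :
    (M : ℝ) * h ≥ Real.arsinh (2 * d / (α * h)) ∧
    Real.arsinh (2 * d / (α * h)) ≥ Real.arsinh (2 / (Real.pi * α)) ∧
    α * Real.sinh ((M : ℝ) * h) ≥ μ * ((2 * d * n / μ) / Real.arsinh (2 * d * n / μ)) := by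
  have hα₀ : 0 < α := hμ.trans_le hα
  have hh₀ : 0 < h := hh ▸ div_pos (arsinh_pos_iff.mpr (by positivity)) (by exact_mod_cast hn)
  have hq : 2 * d / (α * h) = μ / α * (2 * d * n / μ / arsinh (2 * d * n / μ)) :=
    hh ▸ two_mul_div_mul_div_eq d μ α _ n hμ.ne'
  have hMh : arsinh (2 * d / (α * h)) ≤ M * h := hM ▸ hq ▸ le_natCeil_one_div_mul_mul hh₀ _
  refine ⟨hMh, arsinh_le_arsinh.mpr ?_, ?_⟩
  · calc 2 / (π * α) = 2 * d / (α * (π * d)) := by field_simp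
      _ ≤ 2 * d / (α * h) := by gcongr
  · calc μ * (2 * d * n / μ / arsinh (2 * d * n / μ)) = α * (2 * d / (α * h)) := by
          rw [hq]; field_simp
      _ ≤ α * sinh (M * h) := by gcongr; exact le_sinh_iff_arsinh_le.mpr hMh
end
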